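/- Let (L₁, …, L_h; w₁, …, w_h) be a vertex hierarchy of height h on the weighted graph G = (V, w₁), let s, t ∈ V with dist_G(s,t) < ⊤, let p be a walk from s to t in w₁ whose length equals dist_G(s,t), and let m be a vertex appearing on p whose level is maximal among the levels of the vertices appearing on p. Then m is an ancestor of s and an ancestor of t, and moreover d(s,m) = dist_G(s,m) and d(t,m) = dist_G(t,m). -/

import Mathlib

namespace ISLabel

variable {V : Type*}

/-- Two vertices are adjacent in the weighted graph `w` when they are distinct and
joined by an edge of finite weight. -/
def Adj (w : V → V → ℕ∞) (u v : V) : Prop := u ≠ v ∧ w u v < ⊤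

/-- `p` is a walk from `u` to `v` in the weighted graph `w`: a nonempty list of
vertices starting at `u`, ending at `v`, with consecutive vertices adjacent. -/
def IsWalk (w : V → V → ℕ∞) (u v : V) (p : List V) : Prop :=
  p ≠ [] ∧ p.head? = some u ∧ p.getLast? = some v ∧ p.Chain' (Adj w)

/-- The length of a list of vertices: the sum of `f` over consecutive pairs. -/
def pathLen (f : V → V → ℕ∞) (p : List V) : ℕ∞ :=
  ((p.zip p.tail).map fun e => f e.1 e.2).sum

/-- The distance from `u` to `v` in `w`: the infimum of the lengths of all walks
from `u` to `v` (`⊤` if there is no such walk). -/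
noncomputable def wdist (w : V → V → ℕ∞) (u v : V) : ℕ∞ :=
  ⨅ p : {p : List V // IsWalk w u v p}, pathLen w p.1

/-- `I` is an independent set in `w`. -/
def IsIndep (w : V → V → ℕ∞) (I : Set V) : Prop :=
  ∀ u ∈ I, ∀ v ∈ I, ¬ Adj w u v

/-- `w` is a weighted undirected graph: symmetric, and every off-diagonal value is
either `⊤` (no edge) or a weight `≥ 1`. -/
def IsWGraph (w : V → V → ℕ∞) : Prop :=
  (∀ u v, w u v = w v u) ∧ ∀ u v, u ≠ v → 1 ≤ w u v

/-- `w` is supported on `S`: all weights touching a vertex outside `S` are `⊤`. -/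
def SupportedOn (w : V → V → ℕ∞) (S : Set V) : Prop :=
  ∀ u v, u ∉ S ∨ v ∉ S → w u v = ⊤

/-- `VsetOf L i` is the vertex set `V_i = V ∖ (L₁ ∪ … ∪ L_{i-1})`. -/
def VsetOf (L : ℕ → Set V) (i : ℕ) : Set V := {v | ∀ j, 1 ≤ j → j < i → v ∉ L j}

/-- A vertex hierarchy of height `h ≥ 1` on the weighted graph `w 1`:
pairwise disjoint independent levels `L 1, …, L h` covering `V`, and graphs
`w i` supported on `V_i` obtained by the augmenting-edge construction. -/
structure VertexHierarchy (V : Type*) (h : ℕ) where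
  L : ℕ → Set V
  w : ℕ → V → V → ℕ∞
  h_pos : 1 ≤ h
  wgraph : ∀ i, 1 ≤ i → i ≤ h → IsWGraph (w i)
  disj : ∀ i j, 1 ≤ i → i ≤ h → 1 ≤ j → j ≤ h → i ≠ j → ∀ v, v ∈ L i → v ∉ L j
  cover : ∀ v : V, ∃ i, 1 ≤ i ∧ i ≤ h ∧ v ∈ L i
  supported : ∀ i, 1 ≤ i → i ≤ h → SupportedOn (w i) (VsetOf L i)
  aug : ∀ i, 2 ≤ i → i ≤ h → ∀ u v : V, u ≠ v → u ∈ VsetOf L i → v ∈ VsetOf L i →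
    w i u v = min (w (i - 1) u v) (⨅ x ∈ L (i - 1), w (i - 1) u x + w (i - 1) x v)
  indep : ∀ i, 1 ≤ i → i ≤ h → IsIndep (w i) (L i)

/-- The level `ℓ(v)`: the unique `i` with `1 ≤ i ≤ h` and `v ∈ L i`. -/
noncomputable def level {h : ℕ} (H : VertexHierarchy V h) (v : V) : ℕ :=
  sInf {i | 1 ≤ i ∧ i ≤ h ∧ v ∈ H.L i}

/-- One step of an ascending sequence: go to a strictly higher-level vertex that is
adjacent in the graph at the current vertex's level. -/
def AscStep {h : ℕ} (H : VertexHierarchy V h) (a b : V) : Prop :=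
  level H a < level H b ∧ Adj (H.w (level H a)) a b

/-- `p` is an ascending sequence from `v` to `u`. -/
def IsAscending {h : ℕ} (H : VertexHierarchy V h) (v u : V) (p : List V) : Prop :=
  p ≠ [] ∧ p.head? = some v ∧ p.getLast? = some u ∧ p.Chain' (AscStep H)

/-- The set of ancestors of `v`. -/
def Anc {h : ℕ} (H : VertexHierarchy V h) (v : V) : Set V :=
  {u | ∃ p, IsAscending H v u p}

/-- `d(v,u)`: the infimum of the lengths of ascending sequences from `v` to `u`,
where each step `a → b` costs `w (ℓ(a)) a b`; `⊤` if `u` is not an ancestor of `v`. -/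
noncomputable def ancDist {h : ℕ} (H : VertexHierarchy V h) (v u : V) : ℕ∞ :=
  ⨅ p : {p : List V // IsAscending H v u p},
    pathLen (fun a b => H.w (level H a) a b) p.1

/-!
Split the shortest walk at `m`: both halves are shortest walks, and all their vertices have level
at most `ℓ(m)`. Such a walk from `c` to `m` in `G_i` is turned into an ascending sequence from `c`
to `m` that is no longer, by induction down the hierarchy: if `ℓ(c) = i`, the first edge of the
walk goes up (as `L_i` is independent in `G_i`) and is the first step of the sequence; otherwise
`c, m ∉ L_i`, and bypassing the vertices of `L_i` by augmenting edges gives a walk in `G_{i+1}`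
that is no longer. Conversely every edge of `G_i` is at least as long as the distance in `G`
between its ends, so no ascending sequence is shorter than the distance.
-/

section Walks

variable {w : V → V → ℕ∞} {u v x : V} {p : List V}

lemma chain'_iff_isChain {R : V → V → Prop} {l : List V} : l.Chain' R ↔ l.IsChain R := Iff.rfl

@[simp] lemma pathLen_singleton (f : V → V → ℕ∞) (a : V) : pathLen f [a] = 0 := by
  simp [pathLen]

@[simp] lemma pathLen_cons_cons (f : V → V → ℕ∞) (a b : V) (l : List V) :
    pathLen f (a :: b :: l) = f a b + pathLen f (b :: l) := by
  simp [pathLen]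

lemma pathLen_append_cons (f : V → V → ℕ∞) (l₁ : List V) (x : V) (l₂ : List V) :
    pathLen f (l₁ ++ x :: l₂) = pathLen f (l₁ ++ [x]) + pathLen f (x :: l₂) := by
  induction l₁ using List.twoStepInduction with
  | nil => simp
  | singleton a => simp
  | cons_cons a b l _ ih =>
    simp only [List.cons_append, pathLen_cons_cons] at ih ⊢
    rw [ih b, add_assoc]

lemma pathLen_reverse {f : V → V → ℕ∞} (hf : ∀ a b, f a b = f b a) (p : List V) :
    pathLen f p.reverse = pathLen f p := by
  induction p using List.twoStepInduction with
  | nil => simp [pathLen]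
  | singleton a => simp
  | cons_cons a b l _ ih =>
    rw [List.reverse_cons, List.reverse_cons, List.append_assoc, List.singleton_append,
      pathLen_append_cons, ← List.reverse_cons, ih]
    simp [hf b a, add_comm]

lemma isWalk_singleton (w : V → V → ℕ∞) (v : V) : IsWalk w v v [v] := by
  simp [IsWalk, chain'_iff_isChain]

lemma IsWalk.exists_eq_cons (hp : IsWalk w u v p) : ∃ l, p = u :: l :=
  List.head?_eq_some_iff.1 hp.2.1

lemma isWalk_singleton_iff {a : V} : IsWalk w u v [a] ↔ a = u ∧ a = v := by
  simp [IsWalk, chain'_iff_isChain]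

lemma isWalk_cons_cons_iff {a : V} {l : List V} :
    IsWalk w u v (u :: a :: l) ↔ Adj w u a ∧ IsWalk w a v (a :: l) := by
  simp only [IsWalk, chain'_iff_isChain, ne_eq, reduceCtorEq, not_false_eq_true, List.head?_cons,
    List.getLast?_cons_cons, List.isChain_cons_cons, true_and]
  tauto

lemma isWalk_append_cons_iff {l₁ l₂ : List V} :
    IsWalk w u v (l₁ ++ x :: l₂) ↔ IsWalk w u x (l₁ ++ [x]) ∧ IsWalk w x v (x :: l₂) := by
  simp only [IsWalk, chain'_iff_isChain]
  rw [List.isChain_split]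
  simp only [ne_eq, List.append_eq_nil_iff, reduceCtorEq, and_false, not_false_eq_true,
    List.head?_append, List.head?_cons, Option.or_some,
    List.getLast?_append_of_ne_nil, List.getLast?_singleton, true_and]
  tauto

lemma pathLen_cons (f : V → V → ℕ∞) (a : V) {b : V} {r : List V} (hr : r.head? = some b) :
    pathLen f (a :: r) = f a b + pathLen f r := by
  obtain ⟨r', rfl⟩ := List.head?_eq_some_iff.1 hr
  exact pathLen_cons_cons f a b r'

lemma IsWalk.exists_cons_le {b c : V} {q : List V} {d : ℕ∞}
    (hq : IsWalk w b v q) (hd : d < ⊤) (hcb : c ≠ b → w c b ≤ d) :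
    ∃ q', IsWalk w c v q' ∧ q' ⊆ c :: q ∧ pathLen w q' ≤ d + pathLen w q := by
  by_cases hc : c = b
  · subst hc
    exact ⟨q, hq, List.subset_cons_self c q, le_add_self⟩
  obtain ⟨l, rfl⟩ := hq.exists_eq_cons
  refine ⟨c :: b :: l, isWalk_cons_cons_iff.2 ⟨⟨hc, (hcb hc).trans_lt hd⟩, hq⟩,
    List.Subset.refl _, ?_⟩
  rw [pathLen_cons_cons]
  exact add_le_add_left (hcb hc) _

lemma IsWalk.reverse (hw : ∀ a b, w a b = w b a) (hp : IsWalk w u v p) :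
    IsWalk w v u p.reverse := by
  obtain ⟨hne, hhead, hlast, hchain⟩ := hp
  refine ⟨by simpa using hne, by simpa using hlast, by simpa using hhead, ?_⟩
  rw [chain'_iff_isChain, List.isChain_reverse]
  exact hchain.imp fun a b hab => ⟨hab.1.symm, hw b a ▸ hab.2⟩

lemma wdist_le_pathLen (hp : IsWalk w u v p) : wdist w u v ≤ pathLen w p :=
  iInf_le (fun q : {q // IsWalk w u v q} => pathLen w q.1) ⟨p, hp⟩

lemma wdist_self (w : V → V → ℕ∞) (v : V) : wdist w v v = 0 :=
  nonpos_iff_eq_zero.1 <| by simpa using wdist_le_pathLen (isWalk_singleton w v)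

lemma exists_isWalk_pathLen_eq_wdist (h : wdist w u v ≠ ⊤) :
    ∃ p, IsWalk w u v p ∧ pathLen w p = wdist w u v := by
  have : Nonempty {p // IsWalk w u v p} := by
    by_contra hempty
    exact h (by simp [wdist, not_nonempty_iff.1 hempty])
  obtain ⟨⟨p, hp⟩, hlen⟩ := ciInf_mem fun q : {q // IsWalk w u v q} => pathLen w q.1
  exact ⟨p, hp, hlen⟩

lemma wdist_triangle (w : V → V → ℕ∞) (u x v : V) :
    wdist w u v ≤ wdist w u x + wdist w x v := by
  rcases eq_or_ne (wdist w u x) ⊤ with h₁ | h₁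
  · simp [h₁]
  rcases eq_or_ne (wdist w x v) ⊤ with h₂ | h₂
  · simp [h₂]
  obtain ⟨p, hp, hpl⟩ := exists_isWalk_pathLen_eq_wdist h₁
  obtain ⟨q, hq, hql⟩ := exists_isWalk_pathLen_eq_wdist h₂
  rw [← hpl, ← hql]
  obtain ⟨l₁, rfl⟩ := List.getLast?_eq_some_iff.1 hp.2.2.1
  obtain ⟨l₂, rfl⟩ := hq.exists_eq_cons
  rw [← pathLen_append_cons]
  exact wdist_le_pathLen (isWalk_append_cons_iff.2 ⟨hp, hq⟩)

lemma wdist_comm (hw : ∀ a b, w a b = w b a) (u v : V) : wdist w u v = wdist w v u := by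
  suffices key : ∀ a b, wdist w a b ≤ wdist w b a from le_antisymm (key u v) (key v u)
  intro a b
  rcases eq_or_ne (wdist w b a) ⊤ with h | h
  · simp [h]
  obtain ⟨p, hp, hpl⟩ := exists_isWalk_pathLen_eq_wdist h
  rw [← hpl, ← pathLen_reverse hw]
  exact wdist_le_pathLen (hp.reverse hw)

lemma wdist_le_pathLen_of_le {g : V → V → ℕ∞} (hg : ∀ a b, wdist w a b ≤ g a b) :
    ∀ {p : List V} {u : V}, p.head? = some u → p.getLast? = some v →
      wdist w u v ≤ pathLen g p
  | [], _, hu, _ => by simp at hu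
  | [a], u, hu, hv => by
    obtain rfl : a = u := by simpa using hu
    obtain rfl : a = v := by simpa using hv
    simp [wdist_self]
  | a :: b :: l, u, hu, hv => by
    obtain rfl : a = u := by simpa using hu
    rw [List.getLast?_cons_cons] at hv
    calc wdist w a v ≤ wdist w a b + wdist w b v := wdist_triangle w a b v
      _ ≤ g a b + pathLen g (b :: l) := add_le_add (hg a b) (wdist_le_pathLen_of_le hg rfl hv)
      _ = pathLen g (a :: b :: l) := (pathLen_cons_cons g a b l).symm

lemma pathLen_le_wdist_of_append_cons {l₁ l₂ : List V} (hp : IsWalk w u v (l₁ ++ x :: l₂))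
    (hlen : pathLen w (l₁ ++ x :: l₂) = wdist w u v) (hfin : wdist w u v < ⊤) :
    pathLen w (l₁ ++ [x]) ≤ wdist w u x ∧ pathLen w (x :: l₂) ≤ wdist w x v := by
  obtain ⟨hp₁, hp₂⟩ := isWalk_append_cons_iff.1 hp
  rw [pathLen_append_cons] at hlen
  rw [← hlen] at hfin
  have hsplit : pathLen w (l₁ ++ [x]) + pathLen w (x :: l₂) ≤ wdist w u x + wdist w x v :=
    hlen.le.trans (wdist_triangle w u x v)
  constructor
  · rw [← ENat.add_le_add_iff_right (ENat.add_lt_top.1 hfin).2.ne]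
    exact hsplit.trans (add_le_add_right (wdist_le_pathLen hp₂) _)
  · rw [← ENat.add_le_add_iff_left (ENat.add_lt_top.1 hfin).1.ne]
    exact hsplit.trans (add_le_add_left (wdist_le_pathLen hp₁) _)

end Walks

section Hierarchy

variable {h : ℕ} (H : VertexHierarchy V h) {i : ℕ} {u v : V}

lemma level_spec (v : V) : 1 ≤ level H v ∧ level H v ≤ h ∧ v ∈ H.L (level H v) :=
  Nat.sInf_mem (H.cover v)

lemma level_eq_of_mem (hi : 1 ≤ i) (hih : i ≤ h) (hv : v ∈ H.L i) : level H v = i := by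
  by_contra hne
  obtain ⟨h₁, h₂, hmem⟩ := level_spec H v
  exact H.disj _ _ h₁ h₂ hi hih hne v hmem hv

lemma lt_level_of_not_mem (hle : i ≤ level H v) (hv : v ∉ H.L i) : i < level H v :=
  hle.lt_of_ne fun he => hv (he ▸ (level_spec H v).2.2)

lemma mem_VsetOf_iff : v ∈ VsetOf H.L i ↔ i ≤ level H v := by
  obtain ⟨h₁, h₂, hmem⟩ := level_spec H v
  constructor
  · intro hv
    by_contra! hlt
    exact hv _ h₁ hlt hmem
  · intro hle j hj hji hvj
    have := level_eq_of_mem H hj (by omega) hvj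
    omega

lemma le_level_of_adj (hi : 1 ≤ i) (hih : i ≤ h) (huv : Adj (H.w i) u v) :
    i ≤ level H u ∧ i ≤ level H v := by
  have hin : ¬(u ∉ VsetOf H.L i ∨ v ∉ VsetOf H.L i) := fun hout =>
    huv.2.ne (H.supported i hi hih u v hout)
  simpa [mem_VsetOf_iff] using hin

lemma ascStep_of_adj (huv : Adj (H.w (level H u)) u v) : AscStep H u v := by
  obtain ⟨h₁, h₂, hu⟩ := level_spec H u
  refine ⟨lt_level_of_not_mem H (le_level_of_adj H h₁ h₂ huv).2 fun hv => ?_, huv⟩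
  exact H.indep _ h₁ h₂ u hu v hv huv

lemma w_succ_eq (hi : 1 ≤ i) (hih : i + 1 ≤ h) (huv : u ≠ v) (hu : i < level H u)
    (hv : i < level H v) :
    H.w (i + 1) u v = min (H.w i u v) (⨅ x ∈ H.L i, H.w i u x + H.w i x v) :=
  H.aug (i + 1) (by omega) hih u v huv ((mem_VsetOf_iff H).2 hu) ((mem_VsetOf_iff H).2 hv)

lemma wdist_le_w (hi : 1 ≤ i) (hih : i ≤ h) (u v : V) : wdist (H.w 1) u v ≤ H.w i u v := by
  induction i, hi using Nat.le_induction generalizing u v with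
  | base =>
    rcases eq_or_ne (H.w 1 u v) ⊤ with htop | hlt
    · simp [htop]
    rcases eq_or_ne u v with rfl | huv
    · simp [wdist_self]
    simpa using wdist_le_pathLen (isWalk_cons_cons_iff.2
      ⟨⟨huv, hlt.lt_top⟩, isWalk_singleton (H.w 1) v⟩)
  | succ i hi ih =>
    rcases eq_or_ne u v with rfl | huv
    · simp [wdist_self]
    by_cases hin : u ∈ VsetOf H.L (i + 1) ∧ v ∈ VsetOf H.L (i + 1)
    · simp only [mem_VsetOf_iff, Nat.succ_le_iff] at hin
      rw [w_succ_eq H hi hih huv hin.1 hin.2]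
      refine le_min (ih (by omega) u v) (le_iInf₂ fun x _ => ?_)
      exact (wdist_triangle _ u x v).trans (add_le_add (ih (by omega) u x) (ih (by omega) x v))
    · rw [H.supported (i + 1) (by omega) hih u v (not_and_or.1 hin)]
      exact le_top

/-- A detour `c → y → b` through `y ∈ L i` is replaced by the augmenting edge `c b`. -/
lemma exists_walk_succ_le (hi : 1 ≤ i) (hih : i + 1 ≤ h) {m : V} (hm : m ∉ H.L i) :
    ∀ {q : List V} {c : V}, IsWalk (H.w i) c m q → c ∉ H.L i →
      ∃ q', IsWalk (H.w (i + 1)) c m q' ∧ q' ⊆ q ∧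
        pathLen (H.w (i + 1)) q' ≤ pathLen (H.w i) q
  | [], _, hq, _ => absurd rfl hq.1
  | [a], c, hq, _ =>
    ⟨[a], isWalk_singleton_iff.2 (isWalk_singleton_iff.1 hq), List.Subset.refl _, le_rfl⟩
  | a :: y :: rest, c, hq, hc => by
    obtain rfl : c = a := by simpa using hq.2.1.symm
    obtain ⟨hcy, hq'⟩ := isWalk_cons_cons_iff.1 hq
    have hic := lt_level_of_not_mem H (le_level_of_adj H hi (by omega) hcy).1 hc
    by_cases hy : y ∈ H.L i
    · obtain ⟨b, rest', rfl⟩ : ∃ b rest', rest = b :: rest' := by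
        rcases rest with _ | ⟨b, rest'⟩
        · exact absurd (isWalk_singleton_iff.1 hq').2 fun hym => hm (hym ▸ hy)
        · exact ⟨b, rest', rfl⟩
      obtain ⟨hyb, hb⟩ := isWalk_cons_cons_iff.1 hq'
      have hbL : b ∉ H.L i := fun hbL => H.indep i hi (by omega) y hy b hbL hyb
      have hib := lt_level_of_not_mem H (le_level_of_adj H hi (by omega) hyb).2 hbL
      obtain ⟨q'', hq'', hsub, hlen⟩ := exists_walk_succ_le hi hih hm hb hbL
      obtain ⟨q', hwalk, hsub', hlen'⟩ := hq''.exists_cons_le (ENat.add_lt_top.2 ⟨hcy.2, hyb.2⟩)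
        fun hcb => by
          rw [w_succ_eq H hi hih hcb hic hib]
          exact (min_le_right _ _).trans (iInf₂_le y hy)
      refine ⟨q', hwalk, List.Subset.trans hsub' ?_, hlen'.trans ?_⟩
      · exact List.cons_subset_cons c (List.Subset.trans hsub (List.subset_cons_self y _))
      · simp only [pathLen_cons_cons, add_assoc]
        gcongr
    · have hiy := lt_level_of_not_mem H (le_level_of_adj H hi (by omega) hcy).2 hy
      obtain ⟨q'', hq'', hsub, hlen⟩ := exists_walk_succ_le hi hih hm hq' hy
      obtain ⟨q', hwalk, hsub', hlen'⟩ := hq''.exists_cons_le hcy.2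
        fun hcy' => by
          rw [w_succ_eq H hi hih hcy' hic hiy]
          exact min_le_left _ _
      refine ⟨q', hwalk, List.Subset.trans hsub' (List.cons_subset_cons c hsub), hlen'.trans ?_⟩
      rw [pathLen_cons_cons]
      gcongr

noncomputable def ascWeight (a b : V) : ℕ∞ := H.w (level H a) a b

lemma isAscending_singleton (v : V) : IsAscending H v v [v] := by
  simp [IsAscending, chain'_iff_isChain]

lemma IsAscending.cons {u v b : V} {r : List V} (hub : AscStep H u b)
    (hr : IsAscending H b v r) : IsAscending H u v (u :: r) := by
  obtain ⟨hne, hhead, hlast, hchain⟩ := hr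
  obtain ⟨r', rfl⟩ := List.head?_eq_some_iff.1 hhead
  exact ⟨List.cons_ne_nil _ _, rfl, by simpa using hlast, List.IsChain.cons_cons hub hchain⟩

lemma ancDist_le_pathLen {v u : V} {r : List V} (hr : IsAscending H v u r) :
    ancDist H v u ≤ pathLen (ascWeight H) r :=
  iInf_le (fun q : {q // IsAscending H v u q} => pathLen (ascWeight H) q.1) ⟨r, hr⟩

lemma wdist_le_ancDist (v u : V) : wdist (H.w 1) v u ≤ ancDist H v u :=
  le_iInf fun r => wdist_le_pathLen_of_le
    (fun a b => wdist_le_w H (level_spec H a).1 (level_spec H a).2.1 a b) r.2.2.1 r.2.2.2.1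

/-- Along a walk of `G_i`, a vertex of level `i` steps up to its successor, while a vertex of
higher level hands the rest of the walk over to `G_{i+1}`, where `ih` applies. -/
lemma exists_ascending_of_walk_of_succ {m : V} (hi : 1 ≤ i) (hih : i ≤ h)
    (ih : i < level H m → ∀ {q : List V} {c : V}, IsWalk (H.w (i + 1)) c m q →
      (∀ x ∈ q, level H x ≤ level H m) →
      ∃ r, IsAscending H c m r ∧ pathLen (ascWeight H) r ≤ pathLen (H.w (i + 1)) q) :
    ∀ {q : List V} {c : V}, IsWalk (H.w i) c m q → (∀ x ∈ q, level H x ≤ level H m) →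
      ∃ r, IsAscending H c m r ∧ pathLen (ascWeight H) r ≤ pathLen (H.w i) q
  | [], _, hq, _ => absurd rfl hq.1
  | [a], c, hq, _ => by
    obtain ⟨rfl, rfl⟩ := isWalk_singleton_iff.1 hq
    exact ⟨[a], isAscending_singleton H a, le_rfl⟩
  | a :: b :: rest, c, hq, hmax => by
    obtain rfl : c = a := by simpa using hq.2.1.symm
    obtain ⟨hcb, hq'⟩ := isWalk_cons_cons_iff.1 hq
    by_cases hlc : level H c = i
    · obtain ⟨r, hr, hlen⟩ := exists_ascending_of_walk_of_succ hi hih ih hq'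
        fun x hx => hmax x (List.mem_cons_of_mem c hx)
      refine ⟨c :: r, hr.cons H (ascStep_of_adj H (hlc ▸ hcb)), ?_⟩
      rw [pathLen_cons _ c hr.2.1, pathLen_cons_cons, ascWeight, hlc]
      gcongr
    · have hic := (le_level_of_adj H hi hih hcb).1.lt_of_ne' hlc
      have him := hic.trans_le (hmax c List.mem_cons_self)
      obtain ⟨q', hq'', hsub, hlen⟩ := exists_walk_succ_le H hi
        (him.trans_le (level_spec H m).2.1) (fun hm => him.ne' (level_eq_of_mem H hi hih hm))
        hq fun hc => hic.ne' (level_eq_of_mem H hi hih hc)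
      obtain ⟨r, hr, hrlen⟩ := ih him hq'' fun x hx => hmax x (hsub hx)
      exact ⟨r, hr, hrlen.trans hlen⟩

lemma exists_ascending_of_walk {m c : V} {q : List V} (hi : 1 ≤ i) (hih : i ≤ h)
    (hq : IsWalk (H.w i) c m q) (hmax : ∀ x ∈ q, level H x ≤ level H m) :
    ∃ r, IsAscending H c m r ∧ pathLen (ascWeight H) r ≤ pathLen (H.w i) q := by
  obtain ⟨n, hn⟩ : ∃ n, h - i = n := ⟨_, rfl⟩
  induction n generalizing i c q with
  | zero =>
    refine exists_ascending_of_walk_of_succ H hi hih (fun him => ?_) hq hmax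
    have := (level_spec H m).2.1
    omega
  | succ n ih =>
    exact exists_ascending_of_walk_of_succ H hi hih
      (fun _ _ _ hq' hmax' => ih (by omega) (by omega) hq' hmax' (by omega)) hq hmax

lemma ancDist_eq_wdist_of_walk {s m : V} {q : List V} (hq : IsWalk (H.w 1) s m q)
    (hlen : pathLen (H.w 1) q ≤ wdist (H.w 1) s m) (hmax : ∀ x ∈ q, level H x ≤ level H m) :
    m ∈ Anc H s ∧ ancDist H s m = wdist (H.w 1) s m := by
  obtain ⟨r, hr, hrlen⟩ := exists_ascending_of_walk H le_rfl H.h_pos hq hmax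
  exact ⟨⟨r, hr⟩, le_antisymm ((ancDist_le_pathLen H hr).trans (hrlen.trans hlen))
    (wdist_le_ancDist H s m)⟩

end Hierarchy

theorem maxLevel_vertex_common_ancestor_general {h : ℕ}
    (H : VertexHierarchy V h) (s t : V) (hst : wdist (H.w 1) s t < ⊤)
    (p : List V) (hp : IsWalk (H.w 1) s t p)
    (hlen : pathLen (H.w 1) p = wdist (H.w 1) s t)
    (m : V) (hm : m ∈ p) (hmax : ∀ u ∈ p, level H u ≤ level H m) :
    m ∈ Anc H s ∧ m ∈ Anc H t ∧
      ancDist H s m = wdist (H.w 1) s m ∧ ancDist H t m = wdist (H.w 1) t m := by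
  have hsymm := (H.wgraph 1 le_rfl H.h_pos).1
  obtain ⟨p₁, p₂, rfl⟩ := List.append_of_mem hm
  obtain ⟨hp₁, hp₂⟩ := isWalk_append_cons_iff.1 hp
  obtain ⟨hlen₁, hlen₂⟩ := pathLen_le_wdist_of_append_cons hp hlen hst
  obtain ⟨hs, hs'⟩ := ancDist_eq_wdist_of_walk H hp₁ hlen₁
    fun x hx => hmax x (by simp at hx ⊢; tauto)
  obtain ⟨ht, ht'⟩ := ancDist_eq_wdist_of_walk H (hp₂.reverse hsymm)
    (by rwa [pathLen_reverse hsymm, ← wdist_comm hsymm])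
    fun x hx => hmax x (List.mem_append_right p₁ (List.mem_reverse.1 hx))
  exact ⟨hs, ht, hs', ht'⟩

/-- the max-level vertex of a shortest walk is a common ancestor of
the endpoints, and the label distances to it are exact. -/
theorem maxLevel_vertex_common_ancestor [Fintype V] {h : ℕ}
    (H : VertexHierarchy V h) (s t : V) (hst : wdist (H.w 1) s t < ⊤)
    (p : List V) (hp : IsWalk (H.w 1) s t p)
    (hlen : pathLen (H.w 1) p = wdist (H.w 1) s t)
    (m : V) (hm : m ∈ p) (hmax : ∀ u ∈ p, level H u ≤ level H m) :
    m ∈ Anc H s ∧ m ∈ Anc H t ∧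
      ancDist H s m = wdist (H.w 1) s m ∧ ancDist H t m = wdist (H.w 1) t m :=
  maxLevel_vertex_common_ancestor_general H s t hst p hp hlen m hm hmax

end ISLabel
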